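/- For a connected graph G and an integer r ≥ 1, the strong isometric path complexity of G^r is at most (4r² - 2r) times the strong isometric path complexity of G; the same bound holds for isometric path complexity. -/

import Mathlib

/-!
A cover by `ρ`-rooted isometric paths transfers from `G` to `G^r` at the cost of a factor `r²`,
and back in the same way. An isometric path of `G^r`, expanded into a walk of `G`, is longer than
the distance between its ends by at most `r - 1`, and a walk from `a` with this excess splits
greedily, at the vertices where its prefix stops being geodesic, into `r` isometric paths of `G`
from `a`. Conversely, an isometric path of `G` from `a` is covered by `r` isometric paths of `G^r`
from `a`: reverse its prefixes ending at its last `r` vertices and keep every `r`-th vertex.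
Transferring back shows that `G^r` has a finite cover only if `G` has one, which takes care of the
convention `sInf ∅ = 0`.
-/

open SimpleGraph

variable {V : Type*}

/-- A walk is an isometric path if it is a path and its length equals the distance
between its end-vertices. -/
def IsometricPath (G : SimpleGraph V) {u v : V} (p : G.Walk u v) : Prop :=
  p.IsPath ∧ p.length = G.dist u v

/-- `RootedCover G r k` : the vertices of every isometric path of `G` can be covered by
`k` many `r`-rooted isometric paths of `G`. -/
def RootedCover (G : SimpleGraph V) (r : V) (k : ℕ) : Prop :=
  ∀ ⦃u v : V⦄ (p : G.Walk u v), IsometricPath G p →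
    ∃ Q : Fin k → Σ w : V, G.Walk r w,
      (∀ i, IsometricPath G (Q i).2) ∧
      ∀ x ∈ p.support, ∃ i, x ∈ (Q i).2.support

/-- The isometric path complexity of `G` relative to a root `r`. -/
noncomputable def ipcoR (G : SimpleGraph V) (r : V) : ℕ := sInf {k | RootedCover G r k}

/-- The isometric path complexity of `G`. -/
noncomputable def ipco (G : SimpleGraph V) : ℕ := sInf {k | ∃ r, RootedCover G r k}

/-- The strong isometric path complexity of `G`. -/
noncomputable def sipco (G : SimpleGraph V) : ℕ := sInf {k | ∀ r, RootedCover G r k}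

/-- The `r`-th power of `G`: two distinct vertices are adjacent iff their distance in `G`
is at most `r`. -/
def SimpleGraph.power (G : SimpleGraph V) (r : ℕ) : SimpleGraph V where
  Adj u v := u ≠ v ∧ G.Reachable u v ∧ G.dist u v ≤ r
  symm := ⟨by
    rintro u v ⟨h1, h2, h3⟩
    exact ⟨h1.symm, h2.symm, by rwa [G.dist_comm]⟩⟩
  loopless := ⟨by rintro u ⟨h1, -, -⟩; exact h1 rfl⟩

section Geodesics

variable {G : SimpleGraph V} {u v : V}

theorem isometricPath_iff {p : G.Walk u v} : IsometricPath G p ↔ p.length = G.dist u v :=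
  ⟨And.right, fun h => ⟨p.isPath_of_length_eq_dist h, h⟩⟩

theorem IsometricPath.reverse {p : G.Walk u v} (hp : IsometricPath G p) :
    IsometricPath G p.reverse :=
  isometricPath_iff.2 (by rw [Walk.length_reverse, hp.2, dist_comm])

namespace SimpleGraph.Walk

theorem length_take_eq_dist {p : G.Walk u v} (hp : p.length = G.dist u v) (n : ℕ) :
    (p.take n).length = G.dist u (p.getVert n) :=
  length_eq_dist_of_subwalk hp (p.isSubwalk_take n)

theorem getVert_mem_support_take (p : G.Walk u v) {i n : ℕ} (h : i ≤ n) :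
    p.getVert i ∈ (p.take n).support := by
  simpa [take_getVert, min_eq_right h] using (p.take n).getVert_mem_support i

theorem getVert_mem_support_drop (p : G.Walk u v) {i n : ℕ} (h : n ≤ i) :
    p.getVert i ∈ (p.drop n).support := by
  simpa [drop_getVert, Nat.add_sub_cancel' h] using (p.drop n).getVert_mem_support (i - n)

end SimpleGraph.Walk

end Geodesics

def RootedCoverable (H : SimpleGraph V) (ρ : V) (k : ℕ) (S : Set V) : Prop :=
  ∃ Q : Fin k → Σ w : V, H.Walk ρ w,
    (∀ i, IsometricPath H (Q i).2) ∧ ∀ x ∈ S, ∃ i, x ∈ (Q i).2.support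

def IsometricPathsCoverable (H H' : SimpleGraph V) (m : ℕ) : Prop :=
  ∀ ⦃a w : V⦄ (q : H.Walk a w), IsometricPath H q →
    RootedCoverable H' a m {x | x ∈ q.support}

namespace RootedCoverable

variable {H H' : SimpleGraph V} {ρ σ : V} {k l m : ℕ} {S T : Set V}

theorem mono (h : RootedCoverable H ρ k S) (hTS : T ⊆ S) : RootedCoverable H ρ k T :=
  let ⟨Q, hQ, hcov⟩ := h
  ⟨Q, hQ, fun x hx => hcov x (hTS hx)⟩

theorem union (hS : RootedCoverable H ρ k S) (hT : RootedCoverable H ρ l T) :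
    RootedCoverable H ρ (k + l) (S ∪ T) := by
  obtain ⟨Q, hQ, hQS⟩ := hS
  obtain ⟨R, hR, hRT⟩ := hT
  refine ⟨Fin.append Q R, fun i => ?_, ?_⟩
  · induction i using Fin.addCases with
    | left i => rw [Fin.append_left]; exact hQ i
    | right i => rw [Fin.append_right]; exact hR i
  rintro x (hx | hx)
  · obtain ⟨i, hi⟩ := hQS x hx
    exact ⟨Fin.castAdd l i, by rwa [Fin.append_left]⟩
  · obtain ⟨i, hi⟩ := hRT x hx
    exact ⟨Fin.natAdd k i, by rwa [Fin.append_right]⟩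

theorem of_isometricPath {w : V} {q : H.Walk ρ w} (hq : IsometricPath H q) (hk : 0 < k) :
    RootedCoverable H ρ k {x | x ∈ q.support} :=
  ⟨fun _ => ⟨w, q⟩, fun _ => hq, fun _ hx => ⟨⟨0, hk⟩, hx⟩⟩

theorem bind (hS : RootedCoverable H ρ k S)
    (hpaths : ∀ ⦃w : V⦄ (q : H.Walk ρ w), IsometricPath H q →
      RootedCoverable H' σ m {x | x ∈ q.support}) :
    RootedCoverable H' σ (k * m) S := by
  obtain ⟨Q, hQ, hQS⟩ := hS
  choose R hR hRQ using fun i => hpaths (Q i).2 (hQ i)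
  refine ⟨Function.uncurry R ∘ finProdFinEquiv.symm, fun j => hR _ _, ?_⟩
  intro x hx
  obtain ⟨i, hi⟩ := hQS x hx
  obtain ⟨j, hj⟩ := hRQ i x hi
  exact ⟨finProdFinEquiv (i, j), by rw [Function.comp_apply, Equiv.symm_apply_apply]; exact hj⟩

end RootedCoverable

theorem RootedCover.transfer {H H' : SimpleGraph V} {ρ : V} {c m m' : ℕ}
    (h₁ : IsometricPathsCoverable H' H m) (h₂ : IsometricPathsCoverable H H' m')
    (hc : RootedCover H ρ c) : RootedCover H' ρ (m * m' * c) := by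
  intro u v p hp
  rw [mul_right_comm]
  exact ((h₁ p hp).bind fun _ q hq => hc q hq).bind fun _ q hq => h₂ q hq

theorem Nat.sInf_le_mul_sInf {S T : Set ℕ} {m : ℕ} (hST : ∀ k ∈ S, m * k ∈ T)
    (hTS : T.Nonempty → S.Nonempty) : sInf T ≤ m * sInf S := by
  rcases S.eq_empty_or_nonempty with rfl | hS
  · have hT : T = ∅ := Set.not_nonempty_iff_eq_empty.1 fun hT => by simpa using hTS hT
    simp [hT]
  · exact Nat.sInf_le (hST _ (Nat.sInf_mem hS))

namespace SimpleGraph.Walk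

variable {G : SimpleGraph V} {ρ w : V}

theorem exists_shortcut (W : G.Walk ρ w) (h : G.dist ρ w < W.length) :
    ∃ s < W.length, G.dist ρ (W.getVert s) = s ∧ G.dist ρ (W.getVert (s + 1)) ≤ s := by
  classical
  have hex : ∃ i, G.dist ρ (W.getVert i) < i := ⟨W.length, by rwa [getVert_length]⟩
  have hfind : G.dist ρ (W.getVert (Nat.find hex)) < Nat.find hex := Nat.find_spec hex
  have hle : Nat.find hex ≤ W.length := Nat.find_min' hex (by rwa [getVert_length])
  have hmin := Nat.find_min hex (m := Nat.find hex - 1) (by omega)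
  have htake := dist_le (W.take (Nat.find hex - 1))
  rw [take_length] at htake
  refine ⟨Nat.find hex - 1, by omega, by omega, ?_⟩
  rw [Nat.sub_add_cancel (by omega)]
  omega

theorem rootedCoverable_support {n : ℕ} (W : G.Walk ρ w) (h : W.length ≤ G.dist ρ w + n) :
    RootedCoverable G ρ (n + 1) {x | x ∈ W.support} := by
  induction n generalizing w with
  | zero => exact .of_isometricPath (isometricPath_iff.2 (le_antisymm h (dist_le W))) one_pos
  | succ n ih =>
    by_cases hW : W.length ≤ G.dist ρ w
    · exact .of_isometricPath (isometricPath_iff.2 (le_antisymm hW (dist_le W))) (by omega)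
    obtain ⟨s, hs, hds, hds1⟩ := W.exists_shortcut (by omega)
    obtain ⟨g, hg⟩ := (W.take (s + 1)).reachable.exists_walk_length_eq_dist
    have hshort : (g.append (W.drop (s + 1))).length ≤ G.dist ρ w + n := by
      rw [length_append, hg, drop_length]
      omega
    have hprefix : IsometricPath G (W.take s) :=
      isometricPath_iff.2 (by rw [take_length, min_eq_left hs.le, hds])
    refine ((ih _ hshort).union (.of_isometricPath hprefix one_pos)).mono fun x hx => ?_
    obtain ⟨i, rfl, hi⟩ := mem_support_iff_exists_getVert.1 hx
    rcases le_or_gt i s with his | his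
    · exact Or.inr (W.getVert_mem_support_take his)
    · exact Or.inl ((mem_support_append_iff _ _).2 (Or.inr (W.getVert_mem_support_drop his)))

end SimpleGraph.Walk

section Power

variable {G : SimpleGraph V} {r : ℕ} {u v : V}

namespace SimpleGraph.Walk

theorem exists_walk_of_walk_power (W : (G.power r).Walk u v) :
    ∃ W' : G.Walk u v, W'.length ≤ r * W.length ∧ W.support ⊆ W'.support := by
  induction W with
  | nil => exact ⟨nil, by simp, by simp⟩
  | cons h _ ih =>
    obtain ⟨W', hlen, hsub⟩ := ih
    obtain ⟨g, hg⟩ := h.2.1.exists_walk_length_eq_dist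
    refine ⟨g.append W', ?_, ?_⟩
    · rw [length_append, hg, length_cons, Nat.mul_succ]
      have := h.2.2
      omega
    · rw [support_cons]
      exact List.cons_subset.2 ⟨(mem_support_append_iff _ _).2 (.inl g.start_mem_support),
        fun x hx => (mem_support_append_iff _ _).2 (.inr (hsub hx))⟩

theorem exists_walk_power_sample (hr : 1 ≤ r) (p : G.Walk u v) :
    ∃ P : (G.power r).Walk u v, r * P.length ≤ p.length + (r - 1) ∧
      ∀ i ≤ p.length, r ∣ i → p.getVert i ∈ P.support := by
  induction hl : p.length using Nat.strong_induction_on generalizing u with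
  | _ L ih =>
  rcases Nat.eq_zero_or_pos L with rfl | hL
  · obtain rfl := eq_of_length_eq_zero hl
    exact ⟨nil, by simp, fun i hi _ => by simp [show i = 0 by omega]⟩
  obtain ⟨P, hPlen, hPcov⟩ :=
    ih (L - min r L) (by omega) (p.drop (min r L)) (by rw [drop_length, hl])
  have hcov : ∀ i ≤ L, r ∣ i → 0 < i → p.getVert i ∈ P.support := fun i hi hri hi0 => by
    have hri' := Nat.le_of_dvd hi0 hri
    have hrL : min r L = r := min_eq_left (by omega)
    have := hPcov (i - min r L) (by omega) (by rw [hrL]; exact Nat.dvd_sub hri dvd_rfl)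
    rwa [drop_getVert, Nat.add_sub_cancel' (by omega)] at this
  have hmul : r * P.length = 0 ∨ r ≤ r * P.length :=
    P.length.eq_zero_or_pos.imp (fun h => by rw [h, mul_zero]) (Nat.le_mul_of_pos_right r)
  by_cases hux : u = p.getVert (min r L)
  · refine ⟨P.copy hux.symm rfl, by rw [length_copy]; omega, fun i hi hri => ?_⟩
    rcases i.eq_zero_or_pos with rfl | hi0
    · simp [hux]
    · simpa using hcov i (by omega) hri hi0
  · have hdist := dist_le (p.take (min r L))
    rw [take_length] at hdist
    have hadj : (G.power r).Adj u (p.getVert (min r L)) :=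
      ⟨hux, (p.take _).reachable, by omega⟩
    refine ⟨.cons hadj P, ?_, fun i hi hri => ?_⟩
    · rw [length_cons, Nat.mul_succ]
      omega
    · rcases i.eq_zero_or_pos with rfl | hi0
      · simp
      · exact List.mem_cons_of_mem _ (hcov i (by omega) hri hi0)

end SimpleGraph.Walk

theorem dist_le_mul_dist_power (h : (G.power r).Reachable u v) :
    G.dist u v ≤ r * (G.power r).dist u v := by
  obtain ⟨P, hP⟩ := h.exists_walk_length_eq_dist
  obtain ⟨W, hW, -⟩ := P.exists_walk_of_walk_power
  exact (dist_le W).trans (hP ▸ hW)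

theorem mul_dist_power_le (hr : 1 ≤ r) (h : G.Reachable u v) :
    r * (G.power r).dist u v ≤ G.dist u v + (r - 1) := by
  obtain ⟨p, hp⟩ := h.exists_walk_length_eq_dist
  obtain ⟨P, hP, -⟩ := p.exists_walk_power_sample hr
  calc r * (G.power r).dist u v ≤ r * P.length := Nat.mul_le_mul_left r (dist_le P)
    _ ≤ G.dist u v + (r - 1) := hp ▸ hP

theorem SimpleGraph.Walk.exists_isometricPath_power_sample (hr : 1 ≤ r) {p : G.Walk u v}
    (hp : p.length = G.dist u v) :
    ∃ P : (G.power r).Walk u v, IsometricPath (G.power r) P ∧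
      ∀ i ≤ p.length, r ∣ i → p.getVert i ∈ P.support := by
  obtain ⟨P, hPlen, hPcov⟩ := p.exists_walk_power_sample hr
  refine ⟨P, isometricPath_iff.2 (le_antisymm ?_ (dist_le P)), hPcov⟩
  have := dist_le_mul_dist_power (r := r) P.reachable
  refine Nat.lt_succ_iff.1 (Nat.lt_of_mul_lt_mul_left (a := r) ?_)
  rw [Nat.mul_succ]
  omega

theorem isometricPathsCoverable_of_power (hr : 1 ≤ r) :
    IsometricPathsCoverable (G.power r) G r := by
  intro a w q hq
  obtain ⟨W, hWlen, hsub⟩ := q.exists_walk_of_walk_power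
  have hslack : W.length ≤ G.dist a w + (r - 1) :=
    hWlen.trans (hq.2 ▸ mul_dist_power_le hr W.reachable)
  have hcover := W.rootedCoverable_support hslack
  rw [Nat.sub_add_cancel hr] at hcover
  exact hcover.mono fun x hx => hsub hx

theorem isometricPathsCoverable_to_power (hr : 1 ≤ r) :
    IsometricPathsCoverable G (G.power r) r := by
  intro a w q hq
  have sample_prefix (s : ℕ) : ∃ P : (G.power r).Walk a (q.getVert (q.length - s)),
      IsometricPath (G.power r) P ∧
      ∀ i ≤ q.length - s, r ∣ q.length - s - i → q.getVert i ∈ P.support := by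
    have hm : (q.take (q.length - s)).reverse.length = G.dist (q.getVert (q.length - s)) a := by
      rw [Walk.length_reverse, q.length_take_eq_dist hq.2, dist_comm]
    obtain ⟨P, hP, hPcov⟩ := Walk.exists_isometricPath_power_sample hr hm
    refine ⟨P.reverse, hP.reverse, fun i hi hri => ?_⟩
    have := hPcov (q.length - s - i) (by rw [Walk.length_reverse, Walk.take_length]; omega) hri
    have hidx : min (q.length - s) (min (q.length - s) q.length - (q.length - s - i)) = i := by
      omega
    rw [Walk.getVert_reverse, Walk.take_length, Walk.take_getVert, hidx] at this
    simpa using this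
  choose P hP hPcov using fun s : Fin r => sample_prefix s
  refine ⟨fun s => ⟨_, P s⟩, hP, fun x hx => ?_⟩
  obtain ⟨i, rfl, hi⟩ := Walk.mem_support_iff_exists_getVert.1 hx
  obtain ⟨s, hs⟩ : ∃ s : Fin r, (s : ℕ) = (q.length - i) % r :=
    ⟨⟨_, Nat.mod_lt _ hr⟩, rfl⟩
  have hmod := Nat.mod_le (q.length - i) r
  refine ⟨s, hPcov s i (by omega) ?_⟩
  convert Nat.dvd_sub_mod (n := r) (q.length - i) using 1
  omega

end Power

theorem sipco_power_le_general (G : SimpleGraph V) (r : ℕ) (hr : 1 ≤ r) :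
    sipco (G.power r) ≤ (4 * r ^ 2 - 2 * r) * sipco G ∧
    ipco (G.power r) ≤ (4 * r ^ 2 - 2 * r) * ipco G := by
  have up {ρ : V} {c : ℕ} (h : RootedCover G ρ c) : RootedCover (G.power r) ρ (r * r * c) :=
    h.transfer (isometricPathsCoverable_of_power hr) (isometricPathsCoverable_to_power hr)
  have down {ρ : V} {k : ℕ} (h : RootedCover (G.power r) ρ k) : RootedCover G ρ (r * r * k) :=
    h.transfer (isometricPathsCoverable_to_power hr) (isometricPathsCoverable_of_power hr)
  have hr2 : r * r ≤ 4 * r ^ 2 - 2 * r := by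
    have := Nat.le_mul_self r
    rw [sq]
    omega
  constructor
  · refine (Nat.sInf_le_mul_sInf ?_ ?_).trans (Nat.mul_le_mul_right _ hr2)
    · exact fun c hc ρ => up (hc ρ)
    · rintro ⟨k, hk⟩
      exact ⟨_, fun ρ => down (hk ρ)⟩
  · refine (Nat.sInf_le_mul_sInf ?_ ?_).trans (Nat.mul_le_mul_right _ hr2)
    · rintro c ⟨ρ, hc⟩
      exact ⟨ρ, up hc⟩
    · rintro ⟨k, ρ, hk⟩
      exact ⟨_, ρ, down hk⟩

/-- for a connected graph `G` and `r ≥ 1`, the (strong) isometric path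
complexity of `G^r` is at most `4r² - 2r` times that of `G`. -/
theorem sipco_power_le (G : SimpleGraph V) (hG : G.Connected) (r : ℕ) (hr : 1 ≤ r) :
    sipco (G.power r) ≤ (4 * r ^ 2 - 2 * r) * sipco G ∧
    ipco (G.power r) ≤ (4 * r ^ 2 - 2 * r) * ipco G :=
  sipco_power_le_general G r hr
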